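/- For any ∀⁺ type A of System F and any λ-term t: t ∈ |A| if and only if t β-reduces to some t' with ⊢_{F0} t' : A, where F0 is System F with ∀-elimination restricted to instantiation by type variables only. -/

import Mathlib

/-! Untyped λ-calculus (de Bruijn) and System F realizability semantics. -/

/-- Untyped λ-terms in de Bruijn notation. -/
inductive Lam : Type
  | var : ℕ → Lam
  | app : Lam → Lam → Lam
  | lam : Lam → Lam
deriving DecidableEq

namespace Lam

/-- Shift the free variables ≥ `d` up by one. -/
def lift (d : ℕ) : Lam → Lam
  | var n => if n < d then var n else var (n + 1)
  | app t u => app (lift d t) (lift d u)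
  | lam t => lam (lift (d + 1) t)

/-- Capture-avoiding substitution of `u` for the variable `k` (de Bruijn). -/
def subst : Lam → ℕ → Lam → Lam
  | var n, k, u => if n = k then u else if k < n then var (n - 1) else var n
  | app t s, k, u => app (subst t k u) (subst s k u)
  | lam t, k, u => lam (subst t (k + 1) (lift 0 u))

/-- Free variables of a term. -/
def fv : Lam → Finset ℕ
  | var n => {n}
  | app t u => fv t ∪ fv u
  | lam t => ((fv t).erase 0).image (· - 1)

/-- One-step β-reduction. -/
inductive Beta : Lam → Lam → Prop
  | beta (t u : Lam) : Beta (app (lam t) u) (subst t 0 u)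
  | appL {t t' : Lam} (u : Lam) : Beta t t' → Beta (app t u) (app t' u)
  | appR (t : Lam) {u u' : Lam} : Beta u u' → Beta (app t u) (app t u')
  | lam {t t' : Lam} : Beta t t' → Beta (lam t) (lam t')

/-- Many-step β-reduction. -/
def BetaStar : Lam → Lam → Prop := Relation.ReflTransGen Beta

/-- β-equivalence. -/
def BetaEq : Lam → Lam → Prop := Relation.EqvGen Beta

/-- One-step η-reduction. -/
inductive Eta : Lam → Lam → Prop
  | eta (t : Lam) : Eta (lam (app (lift 0 t) (var 0))) t
  | appL {t t' : Lam} (u : Lam) : Eta t t' → Eta (app t u) (app t' u)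
  | appR (t : Lam) {u u' : Lam} : Eta u u' → Eta (app t u) (app t u')
  | lam {t t' : Lam} : Eta t t' → Eta (lam t) (lam t')

/-- βη-equivalence. -/
def BetaEtaEq : Lam → Lam → Prop := Relation.EqvGen (fun t u => Beta t u ∨ Eta t u)

/-- One-step weak head reduction: contracts the weak head redex `(λ t) u`
possibly applied to further arguments. -/
inductive Whr : Lam → Lam → Prop
  | head (t u : Lam) : Whr (app (lam t) u) (subst t 0 u)
  | appL {t t' : Lam} (u : Lam) : Whr t t' → Whr (app t u) (app t' u)

/-- Many-step weak head reduction (`≻_f`). -/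
def WhrStar : Lam → Lam → Prop := Relation.ReflTransGen Whr

/-- A term is normal when it has no β-redex. -/
def Normal (t : Lam) : Prop := ∀ u, ¬ Beta t u

def Normalizable (t : Lam) : Prop := ∃ u, BetaStar t u ∧ Normal u

/-- `(t)v₁…vₘ`. -/
def appList (t : Lam) (l : List Lam) : Lam := l.foldl app t

end Lam

/-- A set of λ-terms is saturated when it is closed under weak-head-expansion. -/
def Saturated (G : Set Lam) : Prop := ∀ t u : Lam, Lam.WhrStar t u → u ∈ G → t ∈ G

/-- A set of λ-terms is β-saturated when it is closed under β-expansion. -/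
def BetaSaturated (G : Set Lam) : Prop := ∀ t u : Lam, Lam.BetaStar t u → u ∈ G → t ∈ G

/-- `G → G' = {u : ∀ t ∈ G, (u)t ∈ G'}`. -/
def arrowSet (G G' : Set Lam) : Set Lam := {u | ∀ t ∈ G, Lam.app u t ∈ G'}

/-- Types of System F (de Bruijn type variables). -/
inductive Ty : Type
  | var : ℕ → Ty
  | arr : Ty → Ty → Ty
  | all : Ty → Ty
deriving DecidableEq

namespace Ty

/-- Shift the free type variables ≥ `d` up by one. -/
def lift (d : ℕ) : Ty → Ty
  | var n => if n < d then var n else var (n + 1)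
  | arr A B => arr (lift d A) (lift d B)
  | all A => all (lift (d + 1) A)

/-- Capture-avoiding substitution of the type `C` for the type variable `k`. -/
def subst : Ty → ℕ → Ty → Ty
  | var n, k, C => if n = k then C else if k < n then var (n - 1) else var n
  | arr A B, k, C => arr (subst A k C) (subst B k C)
  | all A, k, C => all (subst A (k + 1) (lift 0 C))

/-- Free type variables. -/
def fv : Ty → Finset ℕ
  | var n => {n}
  | arr A B => fv A ∪ fv B
  | all A => ((fv A).erase 0).image (· - 1)

end Ty

mutual
  /-- ∀⁺ types: types with positive quantifiers. -/
  inductive PosTy : Ty → Prop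
    | var (n : ℕ) : PosTy (Ty.var n)
    | arr {B A : Ty} : NegTy B → PosTy A → PosTy (Ty.arr B A)
    | all {A : Ty} : PosTy A → 0 ∈ A.fv → PosTy (Ty.all A)
  /-- ∀⁻ types: types with negative quantifiers. -/
  inductive NegTy : Ty → Prop
    | var (n : ℕ) : NegTy (Ty.var n)
    | arr {B A : Ty} : PosTy B → NegTy A → NegTy (Ty.arr B A)
end

/-- Typing contexts: a partial assignment of types to (de Bruijn) term variables. -/
def Ctx : Type := ℕ → Option Ty

def Ctx.empty : Ctx := fun _ => none

def Ctx.cons (B : Ty) (Γ : Ctx) : Ctx := fun n =>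
  match n with
  | 0 => some B
  | n + 1 => Γ n

/-- Shift all type variables of a context (used for ∀-introduction: the fresh
type variable `0` does not occur in the shifted context). -/
def Ctx.liftTy (Γ : Ctx) : Ctx := fun n => (Γ n).map (Ty.lift 0)

/-- Curry-style typing of System F. -/
inductive TyJ : Ctx → Lam → Ty → Prop
  | var {Γ : Ctx} {x : ℕ} {A : Ty} : Γ x = some A → TyJ Γ (Lam.var x) A
  | lam {Γ : Ctx} {B C : Ty} {t : Lam} :
      TyJ (Ctx.cons B Γ) t C → TyJ Γ (Lam.lam t) (Ty.arr B C)
  | app {Γ : Ctx} {B C : Ty} {u v : Lam} :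
      TyJ Γ u (Ty.arr B C) → TyJ Γ v B → TyJ Γ (Lam.app u v) C
  | allI {Γ : Ctx} {A : Ty} {t : Lam} :
      TyJ (Ctx.liftTy Γ) t A → TyJ Γ t (Ty.all A)
  | allE {Γ : Ctx} {A : Ty} {t : Lam} (C : Ty) :
      TyJ Γ t (Ty.all A) → TyJ Γ t (Ty.subst A 0 C)

/-- System F0 : System F where ∀-elimination only instantiates by type variables. -/
inductive TyJ0 : Ctx → Lam → Ty → Prop
  | var {Γ : Ctx} {x : ℕ} {A : Ty} : Γ x = some A → TyJ0 Γ (Lam.var x) A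
  | lam {Γ : Ctx} {B C : Ty} {t : Lam} :
      TyJ0 (Ctx.cons B Γ) t C → TyJ0 Γ (Lam.lam t) (Ty.arr B C)
  | app {Γ : Ctx} {B C : Ty} {u v : Lam} :
      TyJ0 Γ u (Ty.arr B C) → TyJ0 Γ v B → TyJ0 Γ (Lam.app u v) C
  | allI {Γ : Ctx} {A : Ty} {t : Lam} :
      TyJ0 (Ctx.liftTy Γ) t A → TyJ0 Γ t (Ty.all A)
  | allE {Γ : Ctx} {A : Ty} {t : Lam} (Y : ℕ) :
      TyJ0 Γ t (Ty.all A) → TyJ0 Γ t (Ty.subst A 0 (Ty.var Y))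

/-- Interpretations: assignments of sets of λ-terms to type variables. -/
def Interp : Type := ℕ → Set Lam

def Interp.cons (G : Set Lam) (I : Interp) : Interp := fun n =>
  match n with
  | 0 => G
  | n + 1 => I n

/-- Interpretation of types, parameterized by the admissibility class `C` of
sets used to interpret type variables (e.g. `Saturated`). -/
def interpC (C : Set Lam → Prop) : Ty → Interp → Set Lam
  | Ty.var n, I => I n
  | Ty.arr A B, I => arrowSet (interpC C A I) (interpC C B I)
  | Ty.all A, I => ⋂ (G : Set Lam) (_ : C G), interpC C A (Interp.cons G I)

/-- Girard–Krivine interpretation `|A|_I` with saturated sets. -/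
def interp : Ty → Interp → Set Lam := interpC Saturated

/-- `|A|`, the intersection of `|A|_I` over all admissible interpretations. -/
def SemC (C : Set Lam → Prop) (A : Ty) : Set Lam :=
  {t | ∀ I : Interp, (∀ n, C (I n)) → t ∈ interpC C A I}

/-- `|A| = ⋂_I |A|_I` over interpretations into saturated sets. -/
def Sem (A : Ty) : Set Lam := SemC Saturated A

/-!
Soundness: by standardization, a β-expansion of an F0-typed term weak-head reduces to a term of
the same shape as the typed one, so the adequacy induction goes through for β-expansions of typed
terms; saturation of the interpretations absorbs the weak-head steps.

Completeness: fix a ∀⁻ context `negCtx` in which every ∀⁻ type labels infinitely many variables,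
and interpret the type variable `X` by the terms having a normal reduct of type `X` in `negCtx`
whose free variables avoid those of `t`. By induction on types, every element of (the
interpretation of) a ∀⁺ type has a normal reduct typable at that type, and every term with a
typed neutral normal reduct inhabits a ∀⁻ type. At an arrow one applies to a fresh variable of
the argument type and inverts the typing of the resulting neutral or abstraction; at a quantifier
one instantiates by a fresh type variable and generalizes it afterwards. Finally the reduct of `t`
has no free variables but those of `t`, which it avoids, so it is closed.
-/

/-! ### Renaming and substitution -/

def upRen (r : ℕ → ℕ) : ℕ → ℕ
  | 0 => 0
  | n + 1 => r n + 1

def liftRen (d : ℕ) : ℕ → ℕ := fun n => if n < d then n else n + 1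

def consRen (x : ℕ) (r : ℕ → ℕ) : ℕ → ℕ
  | 0 => x
  | n + 1 => r n

def abstractRen (m : ℕ) : ℕ → ℕ := fun j => if j = m then 0 else j + 1

theorem upRen_liftRen (d : ℕ) : upRen (liftRen d) = liftRen (d + 1) := by
  funext n
  cases n with
  | zero => simp [upRen, liftRen]
  | succ n => by_cases h : n < d <;> simp [upRen, liftRen, h]

theorem upRen_comp (r s : ℕ → ℕ) : upRen r ∘ upRen s = upRen (r ∘ s) := by
  funext n
  cases n <;> rfl

namespace Lam

@[simp] theorem mem_fv_var {n x : ℕ} : x ∈ (var n).fv ↔ x = n := Finset.mem_singleton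

@[simp] theorem mem_fv_app {t u : Lam} {x : ℕ} : x ∈ (app t u).fv ↔ x ∈ t.fv ∨ x ∈ u.fv :=
  Finset.mem_union

@[simp] theorem mem_fv_lam {t : Lam} {x : ℕ} : x ∈ (lam t).fv ↔ x + 1 ∈ t.fv := by
  simp only [fv, Finset.mem_image, Finset.mem_erase]
  constructor
  · rintro ⟨y, ⟨hy, hyt⟩, rfl⟩
    rwa [Nat.sub_add_cancel (Nat.pos_of_ne_zero hy)]
  · exact fun h => ⟨x + 1, ⟨x.succ_ne_zero, h⟩, rfl⟩

def ren (r : ℕ → ℕ) : Lam → Lam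
  | var n => var (r n)
  | app t u => app (ren r t) (ren r u)
  | lam t => lam (ren (upRen r) t)

def scons (u : Lam) (σ : ℕ → Lam) : ℕ → Lam
  | 0 => u
  | n + 1 => σ n

def upSubst (σ : ℕ → Lam) : ℕ → Lam := scons (var 0) (fun n => ren Nat.succ (σ n))

def msubst (σ : ℕ → Lam) : Lam → Lam
  | var n => σ n
  | app t u => app (msubst σ t) (msubst σ u)
  | lam t => lam (msubst (upSubst σ) t)

theorem ren_congr {r r' : ℕ → ℕ} (t : Lam) (h : ∀ x ∈ t.fv, r x = r' x) :
    ren r t = ren r' t := by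
  induction t generalizing r r' with
  | var n => simp [ren, h n]
  | app a b iha ihb =>
    simp only [ren, iha fun x hx => h x (by simp [hx]), ihb fun x hx => h x (by simp [hx])]
  | lam a ih =>
    refine congrArg lam (ih fun x hx => ?_)
    cases x with
    | zero => rfl
    | succ x => simp [upRen, h x (by simpa using hx)]

theorem ren_ren (r s : ℕ → ℕ) (t : Lam) : ren r (ren s t) = ren (r ∘ s) t := by
  induction t generalizing r s with
  | var n => rfl
  | app a b iha ihb => simp [ren, iha, ihb]
  | lam a ih => simp [ren, ih, upRen_comp]

theorem ren_id (t : Lam) : ren id t = t := by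
  induction t with
  | var n => rfl
  | app a b iha ihb => simp [ren, iha, ihb]
  | lam a ih =>
    have : upRen id = id := funext fun n => by cases n <;> rfl
    simp [ren, this, ih]

theorem msubst_ren (σ : ℕ → Lam) (r : ℕ → ℕ) (t : Lam) :
    msubst σ (ren r t) = msubst (σ ∘ r) t := by
  induction t generalizing σ r with
  | var n => rfl
  | app a b iha ihb => simp [ren, msubst, iha, ihb]
  | lam a ih =>
    have : upSubst σ ∘ upRen r = upSubst (σ ∘ r) := funext fun x => by cases x <;> rfl
    simp [ren, msubst, ih, this]

theorem ren_msubst (r : ℕ → ℕ) (σ : ℕ → Lam) (t : Lam) :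
    ren r (msubst σ t) = msubst (ren r ∘ σ) t := by
  induction t generalizing σ r with
  | var n => rfl
  | app a b iha ihb => simp [ren, msubst, iha, ihb]
  | lam a ih =>
    have : ren (upRen r) ∘ upSubst σ = upSubst (ren r ∘ σ) := funext fun x => by
      cases x with
      | zero => rfl
      | succ x => simp [upSubst, scons, ren_ren]; rfl
    simp [ren, msubst, ih, this]

theorem msubst_msubst (σ τ : ℕ → Lam) (t : Lam) :
    msubst σ (msubst τ t) = msubst (fun n => msubst σ (τ n)) t := by
  induction t generalizing σ τ with
  | var n => rfl
  | app a b iha ihb => simp [msubst, iha, ihb]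
  | lam a ih =>
    have : (fun n => msubst (upSubst σ) (upSubst τ n)) = upSubst fun n => msubst σ (τ n) :=
      funext fun x => by
        cases x with
        | zero => rfl
        | succ x => simp only [upSubst, scons, msubst_ren, ren_msubst]; rfl
    simp [msubst, ih, this]

theorem ren_eq_msubst (r : ℕ → ℕ) (t : Lam) : ren r t = msubst (fun n => var (r n)) t := by
  induction t generalizing r with
  | var n => rfl
  | app a b iha ihb => simp [ren, msubst, iha, ihb]
  | lam a ih =>
    have : (fun n => var (upRen r n)) = upSubst fun n => var (r n) :=
      funext fun x => by cases x <;> rfl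
    simp [ren, msubst, ih, this]

theorem msubst_var (t : Lam) : msubst var t = t := by
  simpa [ren_id] using (ren_eq_msubst id t).symm

theorem lift_eq_ren (d : ℕ) (t : Lam) : t.lift d = ren (liftRen d) t := by
  induction t generalizing d with
  | var n => simp only [lift, ren, liftRen]; split <;> rfl
  | app a b iha ihb => simp [lift, ren, iha, ihb]
  | lam a ih => simp [lift, ren, ih, upRen_liftRen]

theorem lift_zero_eq_ren (t : Lam) : t.lift 0 = ren Nat.succ t := by
  rw [lift_eq_ren]
  rfl

theorem subst_eq_msubst (t : Lam) (k : ℕ) (u : Lam) :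
    t.subst k u =
      msubst (fun n => if n = k then u else if k < n then var (n - 1) else var n) t := by
  induction t generalizing k u with
  | var n => rfl
  | app a b iha ihb => simp [subst, msubst, iha, ihb]
  | lam a ih =>
    refine congrArg lam ((ih _ _).trans (congrArg (msubst · a) (funext fun n => ?_)))
    cases n with
    | zero => simp [upSubst, scons]
    | succ n =>
      by_cases h : n = k
      · simp [upSubst, scons, h, lift_zero_eq_ren]
      · by_cases h' : k < n
        · simp [upSubst, scons, h, h', ren]; omega
        · simp [upSubst, scons, h, h', ren]

theorem subst_zero_eq_msubst (t u : Lam) : t.subst 0 u = msubst (scons u var) t := by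
  rw [subst_eq_msubst]
  refine congrArg (msubst · t) (funext fun n => ?_)
  cases n <;> simp [scons]

theorem subst_msubst_upSubst (σ : ℕ → Lam) (t u : Lam) :
    (msubst (upSubst σ) t).subst 0 u = msubst (scons u σ) t := by
  rw [subst_zero_eq_msubst, msubst_msubst]
  refine congrArg (msubst · t) (funext fun n => ?_)
  cases n with
  | zero => rfl
  | succ n =>
    simp only [upSubst, scons, msubst_ren]
    exact msubst_var _

theorem msubst_subst_zero (σ : ℕ → Lam) (t u : Lam) :
    msubst σ (t.subst 0 u) = (msubst (upSubst σ) t).subst 0 (msubst σ u) := by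
  rw [subst_msubst_upSubst, subst_zero_eq_msubst, msubst_msubst]
  refine congrArg (msubst · t) (funext fun n => ?_)
  cases n <;> rfl

theorem ren_subst_zero (r : ℕ → ℕ) (t u : Lam) :
    ren r (t.subst 0 u) = (ren (upRen r) t).subst 0 (ren r u) := by
  rw [ren_eq_msubst, msubst_subst_zero, ren_eq_msubst (upRen r), ← ren_eq_msubst]
  congr 2
  funext n
  cases n <;> rfl

theorem subst_zero_var_eq_ren (t : Lam) (x : ℕ) : t.subst 0 (.var x) = ren (consRen x id) t := by
  rw [subst_zero_eq_msubst, ren_eq_msubst]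
  congr 1
  funext n
  cases n <;> rfl

theorem mem_fv_ren {t : Lam} {r : ℕ → ℕ} {x : ℕ} :
    x ∈ (ren r t).fv ↔ ∃ y ∈ t.fv, r y = x := by
  induction t generalizing r x with
  | var n => simp [ren, eq_comm]
  | app a b iha ihb => simp only [ren, mem_fv_app, iha, ihb]; aesop
  | lam a ih =>
    simp only [ren, mem_fv_lam, ih]
    constructor
    · rintro ⟨_ | y, hy, hr⟩
      · simp [upRen] at hr
      · exact ⟨y, hy, by simpa [upRen] using hr⟩
    · rintro ⟨y, hy, rfl⟩
      exact ⟨y + 1, hy, rfl⟩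

theorem mem_fv_msubst {t : Lam} {σ : ℕ → Lam} {x : ℕ} :
    x ∈ (msubst σ t).fv ↔ ∃ y ∈ t.fv, x ∈ (σ y).fv := by
  induction t generalizing σ x with
  | var n => simp [msubst]
  | app a b iha ihb => simp only [msubst, mem_fv_app, iha, ihb]; aesop
  | lam a ih =>
    simp only [msubst, mem_fv_lam, ih]
    constructor
    · rintro ⟨_ | y, hy, hr⟩
      · simp [upSubst, scons] at hr
      · simp only [upSubst, scons, mem_fv_ren] at hr
        obtain ⟨z, hz, hzx⟩ := hr
        exact ⟨y, hy, Nat.succ_injective hzx ▸ hz⟩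
    · rintro ⟨y, hy, hr⟩
      exact ⟨y + 1, hy, mem_fv_ren.2 ⟨x, hr, rfl⟩⟩


/-! ### Reduction and standardization -/

theorem Beta.msubst {t t' : Lam} (h : Beta t t') (σ : ℕ → Lam) :
    Beta (msubst σ t) (msubst σ t') := by
  induction h generalizing σ with
  | beta a b => rw [msubst_subst_zero]; exact Beta.beta _ _
  | appL u _ ih => exact Beta.appL _ (ih σ)
  | appR t _ ih => exact Beta.appR _ (ih σ)
  | lam _ ih => exact Beta.lam (ih _)

theorem Beta.ren {t t' : Lam} (h : Beta t t') (r : ℕ → ℕ) :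
    Beta (Lam.ren r t) (Lam.ren r t') := by
  simpa only [ren_eq_msubst] using h.msubst _

theorem BetaStar.ren {t t' : Lam} (h : BetaStar t t') (r : ℕ → ℕ) :
    BetaStar (Lam.ren r t) (Lam.ren r t') :=
  Relation.ReflTransGen.lift _ (fun _ _ hb => hb.ren r) _ _ h

theorem BetaStar.app_left {t t' : Lam} (u : Lam) (h : BetaStar t t') :
    BetaStar (app t u) (app t' u) :=
  Relation.ReflTransGen.lift (app · u) (fun _ _ hb => Beta.appL u hb) _ _ h

theorem BetaStar.app {t t' u u' : Lam} (h : BetaStar t t') (h' : BetaStar u u') :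
    BetaStar (Lam.app t u) (Lam.app t' u') :=
  (h.app_left u).trans (Relation.ReflTransGen.lift _ (fun _ _ hb => Beta.appR t' hb) _ _ h')

theorem BetaStar.lam {t t' : Lam} (h : BetaStar t t') : BetaStar (lam t) (lam t') :=
  Relation.ReflTransGen.lift _ (fun _ _ hb => Beta.lam hb) _ _ h

theorem BetaStar.msubst {σ σ' : ℕ → Lam} (h : ∀ n, BetaStar (σ n) (σ' n)) (t : Lam) :
    BetaStar (msubst σ t) (msubst σ' t) := by
  induction t generalizing σ σ' with
  | var n => exact h n
  | app a b iha ihb => exact (iha h).app (ihb h)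
  | lam a ih =>
    refine BetaStar.lam (ih fun n => ?_)
    cases n with
    | zero => exact .refl
    | succ n => exact (h n).ren _

theorem Beta.exists_of_ren {t u : Lam} {r : ℕ → ℕ} (h : Beta (Lam.ren r t) u) :
    ∃ t', Beta t t' ∧ u = Lam.ren r t' := by
  induction t generalizing u r with
  | var n => cases h
  | app a b iha ihb =>
    cases a with
    | lam a =>
      cases h with
      | beta => exact ⟨_, .beta _ _, (ren_subst_zero r a b).symm⟩
      | appL _ h => obtain ⟨a', ha, rfl⟩ := iha h; exact ⟨_, .appL _ ha, rfl⟩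
      | appR _ h => obtain ⟨b', hb, rfl⟩ := ihb h; exact ⟨_, .appR _ hb, rfl⟩
    | _ =>
      cases h with
      | appL _ h => obtain ⟨a', ha, rfl⟩ := iha h; exact ⟨_, .appL _ ha, rfl⟩
      | appR _ h => obtain ⟨b', hb, rfl⟩ := ihb h; exact ⟨_, .appR _ hb, rfl⟩
  | lam a ih =>
    cases h with
    | lam h => obtain ⟨a', ha, rfl⟩ := ih h; exact ⟨_, .lam ha, rfl⟩

theorem BetaStar.exists_of_ren {t u : Lam} {r : ℕ → ℕ} (h : BetaStar (Lam.ren r t) u) :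
    ∃ t', BetaStar t t' ∧ u = Lam.ren r t' := by
  induction h with
  | refl => exact ⟨t, .refl, rfl⟩
  | tail _ hstep ih =>
    obtain ⟨t', ht', rfl⟩ := ih
    obtain ⟨t'', ht'', rfl⟩ := Beta.exists_of_ren hstep
    exact ⟨t'', ht'.tail ht'', rfl⟩

theorem Beta.fv_subset {t t' : Lam} (h : Beta t t') : t'.fv ⊆ t.fv := by
  intro x hx
  induction h generalizing x with
  | beta a b =>
    rw [subst_zero_eq_msubst, mem_fv_msubst] at hx
    obtain ⟨_ | y, hy, hxy⟩ := hx
    · exact mem_fv_app.2 (.inr hxy)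
    · simp only [scons, mem_fv_var] at hxy
      simp [hxy ▸ hy]
  | appL u _ ih => simp only [mem_fv_app] at hx ⊢; exact hx.imp_left (ih ·)
  | appR t _ ih => simp only [mem_fv_app] at hx ⊢; exact hx.imp_right (ih ·)
  | lam _ ih => simp only [mem_fv_lam] at hx ⊢; exact ih hx

theorem BetaStar.fv_subset {t t' : Lam} (h : BetaStar t t') : t'.fv ⊆ t.fv := by
  induction h with
  | refl => rfl
  | tail _ hstep ih => exact hstep.fv_subset.trans ih

inductive Neutral : Lam → Prop
  | var (x : ℕ) : Neutral (var x)
  | app {n : Lam} (v : Lam) : Neutral n → Neutral (Lam.app n v)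

theorem Neutral.ne_lam {n : Lam} (h : Neutral n) (q : Lam) : n ≠ lam q := by
  cases h <;> simp

theorem Normal.betaStar_eq {t u : Lam} (ht : Normal t) (h : BetaStar t u) : u = t := by
  induction h with
  | refl => rfl
  | tail _ hstep ih => subst ih; exact absurd hstep (ht _)

theorem normal_var (n : ℕ) : Normal (var n) := fun _ h => by cases h

theorem normal_lam_iff {t : Lam} : Normal (lam t) ↔ Normal t :=
  ⟨fun h u hu => h _ (.lam hu), fun h _ hu => by cases hu with | lam hb => exact h _ hb⟩

theorem Normal.of_app_left {a b : Lam} (h : Normal (app a b)) : Normal a :=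
  fun _ hu => h _ (.appL b hu)

theorem Normal.ne_lam_of_app {a b : Lam} (h : Normal (app a b)) (q : Lam) : a ≠ lam q := by
  rintro rfl
  exact h _ (.beta q b)

theorem Neutral.normal_app {n v : Lam} (hn : Neutral n) (hn' : Normal n) (hv : Normal v) :
    Normal (Lam.app n v) := by
  intro _ hu
  cases hu with
  | beta q _ => exact hn.ne_lam q rfl
  | appL _ h => exact hn' _ h
  | appR _ h => exact hv _ h

theorem Normal.of_ren {t : Lam} {r : ℕ → ℕ} (h : Normal (ren r t)) : Normal t :=
  fun _ hu => h _ (hu.ren r)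

theorem Normal.neutral_of_ne_lam {a : Lam} (ha : Normal a) (hlam : ∀ q, a ≠ lam q) :
    Neutral a := by
  induction a with
  | var n => exact .var n
  | lam q _ => exact absurd rfl (hlam q)
  | app x y ihx _ => exact .app y (ihx ha.of_app_left ha.ne_lam_of_app)

theorem BetaStar.app_cases {u z w : Lam} (h : BetaStar (Lam.app u z) w) :
    (∃ w₁ w₂, w = Lam.app w₁ w₂ ∧ BetaStar u w₁ ∧ BetaStar z w₂) ∨
    (∃ u₁, BetaStar u (Lam.lam u₁) ∧ BetaStar (u₁.subst 0 z) w) := by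
  induction h with
  | refl => exact .inl ⟨u, z, rfl, .refl, .refl⟩
  | tail _ hstep ih =>
    rcases ih with ⟨w₁, w₂, rfl, h₁, h₂⟩ | ⟨u₁, h₁, h₂⟩
    · cases hstep with
      | beta q _ =>
        refine .inr ⟨q, h₁, ?_⟩
        simp only [subst_zero_eq_msubst]
        exact BetaStar.msubst (fun n => by cases n <;> [exact h₂; exact .refl]) q
      | appL _ hs => exact .inl ⟨_, w₂, rfl, h₁.tail hs, h₂⟩
      | appR _ hs => exact .inl ⟨w₁, _, rfl, h₁, h₂.tail hs⟩
    · exact .inr ⟨u₁, h₁, h₂.tail hstep⟩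

theorem Whr.msubst {t t' : Lam} (h : Whr t t') (σ : ℕ → Lam) :
    Whr (msubst σ t) (msubst σ t') := by
  induction h generalizing σ with
  | head a b => rw [msubst_subst_zero]; exact Whr.head _ _
  | appL u _ ih => exact Whr.appL _ (ih σ)

theorem Whr.beta {t t' : Lam} (h : Whr t t') : Beta t t' := by
  induction h with
  | head a b => exact .beta a b
  | appL u _ ih => exact .appL u ih

theorem WhrStar.betaStar {t t' : Lam} (h : WhrStar t t') : BetaStar t t' :=
  Relation.ReflTransGen.mono (fun _ _ => Whr.beta) _ _ h

theorem WhrStar.app_left {t t' : Lam} (u : Lam) (h : WhrStar t t') :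
    WhrStar (app t u) (app t' u) :=
  Relation.ReflTransGen.lift (app · u) (fun _ _ hb => Whr.appL u hb) _ _ h

theorem WhrStar.msubst {t t' : Lam} (h : WhrStar t t') (σ : ℕ → Lam) :
    WhrStar (msubst σ t) (msubst σ t') :=
  Relation.ReflTransGen.lift _ (fun _ _ hb => hb.msubst σ) _ _ h


inductive Par : Lam → Lam → Prop
  | var (n : ℕ) : Par (var n) (var n)
  | app {t t' u u' : Lam} : Par t t' → Par u u' → Par (app t u) (app t' u')
  | lam {t t' : Lam} : Par t t' → Par (lam t) (lam t')
  | beta {t t' u u' : Lam} : Par t t' → Par u u' → Par (app (lam t) u) (t'.subst 0 u')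

/-- Parallel reduction that contracts no weak-head redex. -/
inductive IntPar : Lam → Lam → Prop
  | var (n : ℕ) : IntPar (var n) (var n)
  | lam {t t' : Lam} : Par t t' → IntPar (lam t) (lam t')
  | app {t t' u u' : Lam} : IntPar t t' → Par u u' → IntPar (app t u) (app t' u')

def IntParStar : Lam → Lam → Prop := Relation.ReflTransGen IntPar

theorem Par.refl (t : Lam) : Par t t := by
  induction t with
  | var n => exact .var n
  | app a b iha ihb => exact .app iha ihb
  | lam a ih => exact .lam ih

theorem Beta.par {t t' : Lam} (h : Beta t t') : Par t t' := by
  induction h with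
  | beta a b => exact .beta (.refl a) (.refl b)
  | appL u _ ih => exact .app ih (.refl u)
  | appR t _ ih => exact .app (.refl t) ih
  | lam _ ih => exact .lam ih

theorem Par.betaStar {t t' : Lam} (h : Par t t') : BetaStar t t' := by
  induction h with
  | var n => exact .refl
  | app _ _ ih₁ ih₂ => exact ih₁.app ih₂
  | lam _ ih => exact ih.lam
  | beta _ _ ih₁ ih₂ => exact (ih₁.lam.app ih₂).tail (.beta _ _)

theorem IntPar.par {t t' : Lam} (h : IntPar t t') : Par t t' := by
  induction h with
  | var n => exact .var n
  | lam h => exact .lam h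
  | app _ h₂ ih => exact .app ih h₂

theorem Par.ren {t t' : Lam} (h : Par t t') (r : ℕ → ℕ) : Par (Lam.ren r t) (Lam.ren r t') := by
  induction h generalizing r with
  | var n => exact .refl _
  | app _ _ ih₁ ih₂ => exact .app (ih₁ r) (ih₂ r)
  | lam _ ih => exact .lam (ih _)
  | beta _ _ ih₁ ih₂ => rw [ren_subst_zero]; exact .beta (ih₁ _) (ih₂ r)

theorem Par.upSubst {σ σ' : ℕ → Lam} (hσ : ∀ n, Par (σ n) (σ' n)) (n : ℕ) :
    Par (Lam.upSubst σ n) (Lam.upSubst σ' n) := by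
  cases n with
  | zero => exact .refl _
  | succ n => exact (hσ n).ren _

theorem Par.msubst {t t' : Lam} (h : Par t t') {σ σ' : ℕ → Lam}
    (hσ : ∀ n, Par (σ n) (σ' n)) : Par (Lam.msubst σ t) (Lam.msubst σ' t') := by
  induction h generalizing σ σ' with
  | var n => exact hσ n
  | app _ _ ih₁ ih₂ => exact .app (ih₁ hσ) (ih₂ hσ)
  | lam _ ih => exact .lam (ih (Par.upSubst hσ))
  | @beta a a' b b' _ _ ih₁ ih₂ =>
    rw [msubst_subst_zero]
    exact .beta (ih₁ (Par.upSubst hσ)) (ih₂ hσ)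

theorem Par.scons {u u' : Lam} (h : Par u u') :
    ∀ n, Par (Lam.scons u Lam.var n) (Lam.scons u' Lam.var n)
  | 0 => h
  | n + 1 => .var n

theorem Par.subst_zero {t t' u u' : Lam} (h : Par t t') (h' : Par u u') :
    Par (t.subst 0 u) (t'.subst 0 u') := by
  simp only [subst_zero_eq_msubst]
  exact h.msubst h'.scons

theorem IntPar.msubst_factor {t t' : Lam} (h : IntPar t t') {σ σ' : ℕ → Lam}
    (hσ : ∀ n, Par (σ n) (σ' n)) (hfac : ∀ n, ∃ v, WhrStar (σ n) v ∧ IntPar v (σ' n)) :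
    ∃ v, WhrStar (Lam.msubst σ t) v ∧ IntPar v (Lam.msubst σ' t') := by
  induction h with
  | var n => exact hfac n
  | lam h => exact ⟨_, .refl, .lam (h.msubst (Par.upSubst hσ))⟩
  | @app _ _ u u' _ hu ih =>
    obtain ⟨v, hv, hv'⟩ := ih
    exact ⟨Lam.app v (Lam.msubst σ u), hv.app_left _, .app hv' (hu.msubst hσ)⟩

/-- Takahashi's factorization of a parallel step, the key to standardization. -/
theorem Par.factor {t u : Lam} (h : Par t u) : ∃ v, WhrStar t v ∧ IntPar v u := by
  induction h with
  | var n => exact ⟨_, .refl, .var n⟩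
  | @app _ _ b _ _ h₂ ih₁ _ =>
    obtain ⟨v, hv, hv'⟩ := ih₁
    exact ⟨Lam.app v b, hv.app_left b, .app hv' h₂⟩
  | @lam a _ h _ => exact ⟨Lam.lam a, .refl, .lam h⟩
  | @beta a _ b _ _ h₂ ih₁ ih₂ =>
    obtain ⟨p, hp, hp'⟩ := ih₁
    have hfac : ∀ n, ∃ v, WhrStar (Lam.scons b Lam.var n) v ∧ IntPar v (Lam.scons _ Lam.var n)
      | 0 => ih₂
      | n + 1 => ⟨_, .refl, .var n⟩
    obtain ⟨v, hv, hv'⟩ := hp'.msubst_factor h₂.scons hfac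
    simp only [subst_zero_eq_msubst] at hv' ⊢
    exact ⟨v, .head (.head a b) (by rw [subst_zero_eq_msubst]; exact (hp.msubst _).trans hv), hv'⟩

theorem IntPar.exists_whrStar_par_of_whr {t u v : Lam} (h : IntPar t u) (hw : Whr u v) :
    ∃ w, WhrStar t w ∧ Par w v := by
  induction h generalizing v with
  | var n => cases hw
  | lam _ => cases hw
  | @app _ _ b _ h₁ h₂ ih =>
    cases hw with
    | head =>
      cases h₁ with
      | @lam a _ hl => exact ⟨a.subst 0 b, .single (.head a b), hl.subst_zero h₂⟩
    | appL _ hw₁ =>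
      obtain ⟨w, hw, hp⟩ := ih hw₁
      exact ⟨Lam.app w b, hw.app_left b, .app hp h₂⟩

theorem IntPar.exists_whrStar_intPar {a b c : Lam} (h : IntPar a b) (hw : WhrStar b c) :
    ∃ d, WhrStar a d ∧ IntPar d c := by
  induction hw using Relation.ReflTransGen.head_induction_on generalizing a with
  | refl => exact ⟨a, .refl, h⟩
  | head hstep _ ih =>
    obtain ⟨d₁, hd₁, hp⟩ := h.exists_whrStar_par_of_whr hstep
    obtain ⟨d₂, hd₂, hip⟩ := hp.factor
    obtain ⟨d, hd, hip'⟩ := ih hip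
    exact ⟨d, (hd₁.trans hd₂).trans hd, hip'⟩

theorem IntParStar.exists_whrStar_intParStar {a b c : Lam} (h : IntParStar a b)
    (hw : WhrStar b c) : ∃ d, WhrStar a d ∧ IntParStar d c := by
  induction h generalizing c with
  | refl => exact ⟨c, hw, .refl⟩
  | tail _ hstep ih =>
    obtain ⟨d₀, hd₀, hip⟩ := hstep.exists_whrStar_intPar hw
    obtain ⟨d, hd, hips⟩ := ih hd₀
    exact ⟨d, hd, hips.tail hip⟩

theorem BetaStar.factor {t u : Lam} (h : BetaStar t u) : ∃ v, WhrStar t v ∧ IntParStar v u := by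
  induction h with
  | refl => exact ⟨t, .refl, .refl⟩
  | tail _ hstep ih =>
    obtain ⟨v, hv, hips⟩ := ih
    obtain ⟨v₂, hv₂, hip₂⟩ := hstep.par.factor
    obtain ⟨d, hd, hips'⟩ := hips.exists_whrStar_intParStar hv₂
    exact ⟨d, hv.trans hd, hips'.tail hip₂⟩

theorem IntParStar.eq_var {v : Lam} {n : ℕ} (h : IntParStar v (var n)) : v = var n := by
  induction h using Relation.ReflTransGen.head_induction_on with
  | refl => rfl
  | head hstep _ ih => subst ih; cases hstep; rfl

theorem IntParStar.exists_of_lam {v q : Lam} (h : IntParStar v (lam q)) :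
    ∃ s, v = lam s ∧ BetaStar s q := by
  induction h using Relation.ReflTransGen.head_induction_on with
  | refl => exact ⟨q, rfl, .refl⟩
  | head hstep _ ih =>
    obtain ⟨s₁, rfl, hs₁⟩ := ih
    cases hstep with
    | lam hp => exact ⟨_, rfl, hp.betaStar.trans hs₁⟩

theorem IntParStar.exists_of_app {v q r : Lam} (h : IntParStar v (app q r)) :
    ∃ s₁ s₂, v = app s₁ s₂ ∧ BetaStar s₁ q ∧ BetaStar s₂ r := by
  induction h using Relation.ReflTransGen.head_induction_on with
  | refl => exact ⟨q, r, rfl, .refl, .refl⟩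
  | head hstep _ ih =>
    obtain ⟨s₁, s₂, rfl, hs₁, hs₂⟩ := ih
    cases hstep with
    | app h₁ h₂ => exact ⟨_, _, rfl, h₁.par.betaStar.trans hs₁, h₂.betaStar.trans hs₂⟩

end Lam

/-! ### Types and typing in F0 -/

namespace Ty

@[simp] theorem mem_fv_var {n x : ℕ} : x ∈ (var n).fv ↔ x = n := Finset.mem_singleton

@[simp] theorem mem_fv_arr {A B : Ty} {x : ℕ} : x ∈ (arr A B).fv ↔ x ∈ A.fv ∨ x ∈ B.fv :=
  Finset.mem_union

@[simp] theorem mem_fv_all {A : Ty} {x : ℕ} : x ∈ (all A).fv ↔ x + 1 ∈ A.fv := by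
  simp only [fv, Finset.mem_image, Finset.mem_erase]
  constructor
  · rintro ⟨y, ⟨hy, hyA⟩, rfl⟩
    rwa [Nat.sub_add_cancel (Nat.pos_of_ne_zero hy)]
  · exact fun h => ⟨x + 1, ⟨x.succ_ne_zero, h⟩, rfl⟩

def ren (r : ℕ → ℕ) : Ty → Ty
  | var n => var (r n)
  | arr A B => arr (ren r A) (ren r B)
  | all A => all (ren (upRen r) A)

theorem ren_congr {r r' : ℕ → ℕ} (A : Ty) (h : ∀ x ∈ A.fv, r x = r' x) :
    ren r A = ren r' A := by
  induction A generalizing r r' with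
  | var n => simp [ren, h n]
  | arr a b iha ihb =>
    simp only [ren, iha fun x hx => h x (by simp [hx]), ihb fun x hx => h x (by simp [hx])]
  | all a ih =>
    refine congrArg all (ih fun x hx => ?_)
    cases x with
    | zero => rfl
    | succ x => simp [upRen, h x (by simpa using hx)]

theorem ren_ren (r s : ℕ → ℕ) (A : Ty) : ren r (ren s A) = ren (r ∘ s) A := by
  induction A generalizing r s with
  | var n => rfl
  | arr a b iha ihb => simp [ren, iha, ihb]
  | all a ih => simp [ren, ih, upRen_comp]

theorem ren_id (A : Ty) : ren id A = A := by
  induction A with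
  | var n => rfl
  | arr a b iha ihb => simp [ren, iha, ihb]
  | all a ih =>
    have : upRen id = id := funext fun n => by cases n <;> rfl
    simp [ren, this, ih]

theorem mem_fv_ren {A : Ty} {r : ℕ → ℕ} {x : ℕ} :
    x ∈ (ren r A).fv ↔ ∃ y ∈ A.fv, r y = x := by
  induction A generalizing r x with
  | var n => simp [ren, eq_comm]
  | arr a b iha ihb => simp only [ren, mem_fv_arr, iha, ihb]; aesop
  | all a ih =>
    simp only [ren, mem_fv_all, ih]
    constructor
    · rintro ⟨_ | y, hy, hr⟩
      · simp [upRen] at hr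
      · exact ⟨y, hy, by simpa [upRen] using hr⟩
    · rintro ⟨y, hy, rfl⟩
      exact ⟨y + 1, hy, rfl⟩

theorem lift_eq_ren (d : ℕ) (A : Ty) : A.lift d = ren (liftRen d) A := by
  induction A generalizing d with
  | var n => simp only [lift, ren, liftRen]; split <;> rfl
  | arr a b iha ihb => simp [lift, ren, iha, ihb]
  | all a ih => simp [lift, ren, ih, upRen_liftRen]

theorem lift_zero_eq_ren (A : Ty) : A.lift 0 = ren Nat.succ A := by
  rw [lift_eq_ren]
  rfl

theorem zero_notMem_fv_lift_zero (A : Ty) : 0 ∉ (A.lift 0).fv := by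
  simp [lift_zero_eq_ren, mem_fv_ren]

theorem lift_one_eq_lift_zero {A : Ty} (h : 0 ∉ A.fv) : A.lift 1 = A.lift 0 := by
  rw [lift_eq_ren, lift_eq_ren]
  refine ren_congr A fun x hx => ?_
  cases x with
  | zero => exact absurd hx h
  | succ x => simp [liftRen]

def substRen (k y : ℕ) : ℕ → ℕ := fun n => if n = k then y else if k < n then n - 1 else n

theorem subst_var_eq_ren (A : Ty) (k y : ℕ) : A.subst k (var y) = ren (substRen k y) A := by
  induction A generalizing k y with
  | var n => simp only [subst, ren, substRen]; split_ifs <;> rfl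
  | arr a b iha ihb => simp [subst, ren, iha, ihb]
  | all a ih =>
    have hy : lift 0 (var y) = var (y + 1) := rfl
    simp only [subst, hy, ih, ren]
    congr 2
    funext x
    cases x with
    | zero => simp [substRen, upRen]
    | succ x =>
      by_cases h : x = k
      · simp [substRen, upRen, h]
      · by_cases h' : k < x
        · simp [substRen, upRen, h, h']; omega
        · simp [substRen, upRen, h, h']

theorem ren_consRen_abstractRen {A : Ty} {ρ : ℕ → ℕ} {m : ℕ}
    (hm : ∀ j, j + 1 ∈ A.fv → ρ j ≠ m) :
    (A.ren (consRen m ρ)).ren (abstractRen m) = A.ren (upRen ρ) := by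
  rw [ren_ren]
  refine ren_congr A fun j hj => ?_
  cases j with
  | zero => simp [abstractRen, consRen, upRen]
  | succ j => simp [abstractRen, consRen, upRen, hm j hj]

theorem subst_lift_zero (A : Ty) (y : ℕ) : (A.lift 0).subst 0 (var y) = A := by
  rw [lift_zero_eq_ren, subst_var_eq_ren, ren_ren]
  exact (ren_congr A fun x _ => by simp [substRen]).trans (ren_id A)

end Ty

theorem not_negTy_all (A : Ty) : ¬ NegTy (Ty.all A) := nofun

theorem posTy_negTy_ren (A : Ty) (r : ℕ → ℕ) :
    (PosTy A → PosTy (A.ren r)) ∧ (NegTy A → NegTy (A.ren r)) := by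
  induction A generalizing r with
  | var n => exact ⟨fun _ => .var _, fun _ => .var _⟩
  | arr a b iha ihb =>
    refine ⟨fun h => ?_, fun h => ?_⟩
    · cases h with | arr h₁ h₂ => exact .arr ((iha r).2 h₁) ((ihb r).1 h₂)
    · cases h with | arr h₁ h₂ => exact .arr ((iha r).1 h₁) ((ihb r).2 h₂)
  | all a ih =>
    refine ⟨fun h => ?_, fun h => absurd h (not_negTy_all a)⟩
    cases h with
    | all h₁ h₂ => exact .all ((ih _).1 h₁) (Ty.mem_fv_ren.2 ⟨0, h₂, rfl⟩)

theorem PosTy.ren {A : Ty} (h : PosTy A) (r : ℕ → ℕ) : PosTy (A.ren r) :=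
  (posTy_negTy_ren A r).1 h

theorem NegTy.ren {A : Ty} (h : NegTy A) (r : ℕ → ℕ) : NegTy (A.ren r) :=
  (posTy_negTy_ren A r).2 h

namespace Ctx

def mapTy (r : ℕ → ℕ) (Γ : Ctx) : Ctx := fun x => (Γ x).map (Ty.ren r)

theorem liftTy_eq_mapTy (Γ : Ctx) : Γ.liftTy = Γ.mapTy Nat.succ := by
  funext x
  simp only [liftTy, mapTy]
  congr 1
  funext A
  exact Ty.lift_zero_eq_ren A

theorem mapTy_mapTy (r s : ℕ → ℕ) (Γ : Ctx) : (Γ.mapTy s).mapTy r = Γ.mapTy (r ∘ s) := by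
  funext x
  simp only [mapTy, Option.map_map]
  congr 1
  funext A
  exact Ty.ren_ren r s A

theorem mapTy_id (Γ : Ctx) : Γ.mapTy id = Γ := by
  funext x
  cases h : Γ x <;> simp [mapTy, h, Ty.ren_id]

theorem mapTy_cons (r : ℕ → ℕ) (B : Ty) (Γ : Ctx) :
    (cons B Γ).mapTy r = cons (B.ren r) (Γ.mapTy r) := by
  funext x
  cases x <;> rfl

theorem mapTy_liftTy (r : ℕ → ℕ) (Γ : Ctx) : Γ.liftTy.mapTy (upRen r) = (Γ.mapTy r).liftTy := by
  simp only [liftTy_eq_mapTy, mapTy_mapTy]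
  rfl

theorem mapTy_pred_liftTy (Γ : Ctx) : Γ.liftTy.mapTy Nat.pred = Γ := by
  rw [liftTy_eq_mapTy, mapTy_mapTy]
  exact mapTy_id Γ

end Ctx

namespace TyJ0

theorem renTy {Γ : Ctx} {t : Lam} {A : Ty} (d : TyJ0 Γ t A) (r : ℕ → ℕ) :
    TyJ0 (Γ.mapTy r) t (A.ren r) := by
  induction d generalizing r with
  | var h => exact .var (by simp [Ctx.mapTy, h])
  | lam _ ih => exact .lam (by simpa only [Ctx.mapTy_cons] using ih r)
  | app _ _ ih₁ ih₂ => exact .app (ih₁ r) (ih₂ r)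
  | allI _ ih => exact .allI (by simpa only [Ctx.mapTy_liftTy] using ih (upRen r))
  | @allE _ A _ y _ ih =>
    have h := allE (r y) (ih r)
    have hA : (A.ren (upRen r)).subst 0 (.var (r y)) = (A.subst 0 (.var y)).ren r := by
      simp only [Ty.subst_var_eq_ren, Ty.ren_ren]
      refine Ty.ren_congr A fun x _ => ?_
      cases x <;> simp [Ty.substRen, upRen]
    rwa [hA] at h

theorem congr_ctx {Γ : Ctx} {t : Lam} {A : Ty} (d : TyJ0 Γ t A) {Γ' : Ctx}
    (h : ∀ x ∈ t.fv, Γ x = Γ' x) : TyJ0 Γ' t A := by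
  induction d generalizing Γ' with
  | var hx => exact .var ((h _ (Finset.mem_singleton_self _)) ▸ hx)
  | lam _ ih =>
    refine .lam (ih fun x hx => ?_)
    cases x with
    | zero => rfl
    | succ x => exact h x (by simpa using hx)
  | app _ _ ih₁ ih₂ =>
    exact .app (ih₁ fun x hx => h x (by simp [hx])) (ih₂ fun x hx => h x (by simp [hx]))
  | allI _ ih => exact .allI (ih fun x hx => by simp only [Ctx.liftTy, h x hx])
  | allE y _ ih => exact .allE y (ih h)

theorem ren {Γ : Ctx} {t : Lam} {A : Ty} (d : TyJ0 Γ t A) {r : ℕ → ℕ} {Γ' : Ctx}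
    (h : ∀ x ∈ t.fv, Γ' (r x) = Γ x) : TyJ0 Γ' (t.ren r) A := by
  induction d generalizing r Γ' with
  | var hx => exact .var ((h _ (Finset.mem_singleton_self _)).trans hx)
  | lam _ ih =>
    refine .lam (ih fun x hx => ?_)
    cases x with
    | zero => rfl
    | succ x => exact h x (by simpa using hx)
  | app _ _ ih₁ ih₂ =>
    exact .app (ih₁ fun x hx => h x (by simp [hx])) (ih₂ fun x hx => h x (by simp [hx]))
  | allI _ ih => exact .allI (ih fun x hx => by simp only [Ctx.liftTy, h x hx])
  | allE y _ ih => exact .allE y (ih h)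

theorem cons_of_subst_var {Δ : Ctx} {t : Lam} {A B : Ty} {x : ℕ}
    (d : TyJ0 Δ (t.subst 0 (.var x)) A) (hx : Δ x = some B) (hxt : x + 1 ∉ t.fv) :
    TyJ0 (Ctx.cons B Δ) t A := by
  rw [Lam.subst_zero_var_eq_ren] at d
  have h := d.ren (r := abstractRen x) (Γ' := Ctx.cons B Δ) fun y _ => by
    by_cases hy : y = x
    · simp [abstractRen, hy, Ctx.cons, hx]
    · simp [abstractRen, hy, Ctx.cons]
  rwa [Lam.ren_ren, Lam.ren_congr (r' := id) t, Lam.ren_id] at h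
  intro z hz
  cases z with
  | zero => simp [abstractRen, consRen]
  | succ n =>
    have : n ≠ x := by rintro rfl; exact hxt hz
    simp [abstractRen, consRen, this]

theorem unlift {Δ : Ctx} {t : Lam} {X : Ty} (d : TyJ0 Δ.liftTy t (X.lift 0)) : TyJ0 Δ t X := by
  have h := d.renTy Nat.pred
  rwa [Ctx.mapTy_pred_liftTy, Ty.lift_zero_eq_ren, Ty.ren_ren,
    show Nat.pred ∘ Nat.succ = id from rfl, Ty.ren_id] at h

theorem generalize {Γ : Ctx} {t : Lam} {A : Ty} (d : TyJ0 Γ t A) {m : ℕ}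
    (hm : ∀ x ∈ t.fv, ∀ B, Γ x = some B → m ∉ B.fv) :
    TyJ0 Γ t (.all (A.ren (abstractRen m))) := by
  refine .allI ((d.renTy (abstractRen m)).congr_ctx fun x hx => ?_)
  cases hB : Γ x with
  | none => simp [Ctx.mapTy, Ctx.liftTy, hB]
  | some B =>
    simp only [Ctx.mapTy, Ctx.liftTy, hB, Option.map_some, Ty.lift_zero_eq_ren]
    refine congrArg some (Ty.ren_congr B fun j hj => ?_)
    have : j ≠ m := fun h => hm x hx B hB (h ▸ hj)
    simp [abstractRen, this]

end TyJ0

/-- `C` is `S` under a (possibly empty) prefix of vacuous quantifiers. -/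
inductive Ty.VacuousClosure (S : Ty) : Ty → Prop
  | refl : VacuousClosure S S
  | all {T : Ty} : VacuousClosure S T → VacuousClosure S (.all (T.lift 0))

namespace Ty.VacuousClosure

theorem eq_of_posTy {S C : Ty} (h : VacuousClosure S C) (hC : PosTy C) : C = S := by
  cases h with
  | refl => rfl
  | @all T _ => cases hC with | all _ h0 => exact absurd h0 (zero_notMem_fv_lift_zero T)

theorem zero_notMem_fv {S T : Ty} (h : VacuousClosure (S.lift 0) T) : 0 ∉ T.fv := by
  induction h with
  | refl => exact zero_notMem_fv_lift_zero S
  | @all T _ ih =>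
    simp only [mem_fv_all, lift_zero_eq_ren, mem_fv_ren, not_exists, not_and]
    exact fun y hy hy1 => ih (Nat.succ_injective hy1 ▸ hy)

theorem all_of_lift {S C : Ty} (h : VacuousClosure (S.lift 0) C) : VacuousClosure S (.all C) := by
  induction h with
  | refl => exact .all .refl
  | @all T h' ih =>
    have h := ih.all
    rwa [show (Ty.all T).lift 0 = .all (T.lift 1) from rfl, lift_one_eq_lift_zero h'.zero_notMem_fv]
      at h

theorem exists_of_all {S A : Ty} (h : VacuousClosure S (.all A)) (hS : NegTy S) :
    ∃ T, A = T.lift 0 ∧ VacuousClosure S T := by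
  cases h with
  | refl => exact absurd hS (not_negTy_all A)
  | all h' => exact ⟨_, rfl, h'⟩

end Ty.VacuousClosure

def Ctx.IsNeg (Δ : Ctx) : Prop := ∀ x B, Δ x = some B → NegTy B

theorem Ctx.IsNeg.liftTy {Δ : Ctx} (h : Δ.IsNeg) : Δ.liftTy.IsNeg := by
  intro x B hx
  simp only [Ctx.liftTy, Option.map_eq_some_iff] at hx
  obtain ⟨B₀, hB₀, rfl⟩ := hx
  simpa only [Ty.lift_zero_eq_ren] using (h x B₀ hB₀).ren _

/-- Typing of a neutral term by variable and application rules only, i.e. along its spine. -/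
inductive SpineTy (Δ : Ctx) : Lam → Ty → Prop
  | var {x : ℕ} {S : Ty} : Δ x = some S → SpineTy Δ (.var x) S
  | app {n v : Lam} {D S : Ty} : SpineTy Δ n (.arr D S) → TyJ0 Δ v D → SpineTy Δ (.app n v) S

namespace SpineTy

theorem tyJ0 {Δ : Ctx} {n : Lam} {S : Ty} (h : SpineTy Δ n S) : TyJ0 Δ n S := by
  induction h with
  | var hx => exact .var hx
  | app _ hv ih => exact .app ih hv

theorem negTy {Δ : Ctx} {n : Lam} {S : Ty} (hΔ : Δ.IsNeg) (h : SpineTy Δ n S) : NegTy S := by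
  induction h with
  | var hx => exact hΔ _ _ hx
  | app _ _ ih => cases ih with | arr _ h => exact h

theorem unlift {Δ : Ctx} {n : Lam} {S₁ : Ty} (h : SpineTy Δ.liftTy n S₁) :
    ∃ S₀, S₁ = S₀.lift 0 ∧ SpineTy Δ n S₀ := by
  induction h with
  | var hx =>
    simp only [Ctx.liftTy, Option.map_eq_some_iff] at hx
    obtain ⟨S₀, hS₀, rfl⟩ := hx
    exact ⟨S₀, rfl, .var hS₀⟩
  | app _ hv ih =>
    obtain ⟨S₀, heq, hn⟩ := ih
    cases S₀ with
    | arr D₀ S₀ =>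
      obtain ⟨rfl, rfl⟩ := Ty.arr.inj heq
      exact ⟨_, rfl, .app hn hv.unlift⟩
    | _ => simp [Ty.lift] at heq

end SpineTy

/-- Since spine types in a ∀⁻ context are ∀⁻, a ∀-elimination on a neutral term can only undo
a vacuous ∀-introduction. -/
theorem TyJ0.exists_spineTy {Δ : Ctx} {t : Lam} {C : Ty} (d : TyJ0 Δ t C) (hΔ : Δ.IsNeg)
    (ht : t.Neutral) : ∃ S, Ty.VacuousClosure S C ∧ SpineTy Δ t S := by
  induction d with
  | var hx => exact ⟨_, .refl, .var hx⟩
  | lam _ _ => cases ht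
  | app _ hv ih _ =>
    cases ht with
    | app _ ht =>
      obtain ⟨S, hvac, hS⟩ := ih hΔ ht
      cases hvac with
      | refl => exact ⟨_, .refl, .app hS hv⟩
  | allI _ ih =>
    obtain ⟨S₁, hvac, hS⟩ := ih hΔ.liftTy ht
    obtain ⟨S₀, rfl, hS₀⟩ := hS.unlift
    exact ⟨S₀, hvac.all_of_lift, hS₀⟩
  | allE _ _ ih =>
    obtain ⟨S, hvac, hS⟩ := ih hΔ ht
    obtain ⟨T, rfl, hT⟩ := hvac.exists_of_all (hS.negTy hΔ)
    exact ⟨S, by rwa [Ty.subst_lift_zero], hS⟩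

theorem TyJ0.spineTy_of_posTy {Δ : Ctx} {t : Lam} {C : Ty} (d : TyJ0 Δ t C) (hΔ : Δ.IsNeg)
    (ht : t.Neutral) (hC : PosTy C) : SpineTy Δ t C := by
  obtain ⟨S, hvac, hS⟩ := d.exists_spineTy hΔ ht
  rwa [hvac.eq_of_posTy hC]

theorem TyJ0.arr_of_app_var {Δ : Ctx} {w : Lam} {A B : Ty} {x : ℕ} (hΔ : Δ.IsNeg)
    (d : TyJ0 Δ (.app w (.var x)) A) (hA : PosTy A) (hw : w.Neutral) (hx : Δ x = some B) :
    TyJ0 Δ w (.arr B A) := by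
  cases d.spineTy_of_posTy hΔ (hw.app _) hA with
  | @app _ _ D _ hw' hvar =>
    have hD : PosTy D := by cases hw'.negTy hΔ with | arr hD _ => exact hD
    cases hvar.spineTy_of_posTy hΔ (.var x) hD with
    | var hx' => rw [hx] at hx'; cases hx'; exact hw'.tyJ0

/-! ### Adequacy -/

theorem Interp.saturated_cons {G : Set Lam} {I : Interp} (hG : Saturated G)
    (hI : ∀ n, Saturated (I n)) : ∀ n, Saturated (Interp.cons G I n)
  | 0 => hG
  | n + 1 => hI n

theorem mem_interp_all {A : Ty} {I : Interp} {t : Lam} :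
    t ∈ interp (.all A) I ↔ ∀ G, Saturated G → t ∈ interp A (Interp.cons G I) :=
  Set.mem_iInter₂

theorem interp_saturated (A : Ty) {I : Interp} (hI : ∀ n, Saturated (I n)) :
    Saturated (interp A I) := by
  induction A generalizing I with
  | var n => exact hI n
  | arr B C _ ihC => exact fun t u htu hu v hv => ihC hI _ _ (htu.app_left v) (hu v hv)
  | all A ih =>
    intro t u htu hu
    rw [mem_interp_all] at hu ⊢
    exact fun G hG => ih (Interp.saturated_cons hG hI) _ _ htu (hu G hG)

theorem interp_ren (A : Ty) (r : ℕ → ℕ) (I : Interp) :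
    interp (A.ren r) I = interp A (fun n => I (r n)) := by
  induction A generalizing r I with
  | var n => rfl
  | arr B C ihB ihC => exact congrArg₂ arrowSet (ihB r I) (ihC r I)
  | all A ih =>
    ext t
    refine mem_interp_all.trans (Iff.trans (forall₂_congr fun G _ => ?_) mem_interp_all.symm)
    rw [ih, show (fun n => Interp.cons G I (upRen r n)) = Interp.cons G (fun n => I (r n)) from
      funext fun n => by cases n <;> rfl]

theorem interp_subst_var (A : Ty) (y : ℕ) (I : Interp) :
    interp (A.subst 0 (.var y)) I = interp A (Interp.cons (I y) I) := by
  rw [Ty.subst_var_eq_ren, interp_ren]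
  congr 1
  funext n
  cases n <;> rfl

theorem interp_lift_zero (B : Ty) (G : Set Lam) (I : Interp) :
    interp (B.lift 0) (Interp.cons G I) = interp B I := by
  rw [Ty.lift_zero_eq_ren, interp_ren]
  rfl

/-- Adequacy, strengthened to β-expansions of typed terms: by standardization such an expansion
weak-head reduces to a term of the same shape, and interpretations are saturated. -/
theorem TyJ0.msubst_mem_interp {Γ : Ctx} {p : Lam} {A : Ty} (d : TyJ0 Γ p A) {I : Interp}
    (hI : ∀ n, Saturated (I n)) {σ : ℕ → Lam} (hσ : ∀ x B, Γ x = some B → σ x ∈ interp B I)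
    {s : Lam} (hs : Lam.BetaStar s p) : s.msubst σ ∈ interp A I := by
  induction d generalizing I σ s with
  | @var _ x A hx =>
    obtain ⟨v, hw, hv⟩ := hs.factor
    cases hv.eq_var
    exact interp_saturated A hI _ _ (hw.msubst σ) (hσ x A hx)
  | @lam _ B C _ _ ih =>
    obtain ⟨v, hw, hv⟩ := hs.factor
    obtain ⟨s₁, rfl, hs₁⟩ := hv.exists_of_lam
    intro u hu
    have hbody : s₁.msubst (Lam.scons u σ) ∈ interp C I := by
      refine ih hI (fun x B' hx => ?_) hs₁
      cases x with
      | zero => cases hx; exact hu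
      | succ x => exact hσ x B' hx
    refine interp_saturated C hI _ _ ((hw.msubst σ).app_left u |>.tail ?_) hbody
    rw [← Lam.subst_msubst_upSubst]
    exact .head _ _
  | app _ _ ih₁ ih₂ =>
    obtain ⟨v, hw, hv⟩ := hs.factor
    obtain ⟨s₁, s₂, rfl, h₁, h₂⟩ := hv.exists_of_app
    exact interp_saturated _ hI _ _ (hw.msubst σ) (ih₁ hI hσ h₁ _ (ih₂ hI hσ h₂))
  | allI _ ih =>
    refine mem_interp_all.2 fun G hG => ih (Interp.saturated_cons hG hI) (fun x B' hx => ?_) hs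
    simp only [Ctx.liftTy, Option.map_eq_some_iff] at hx
    obtain ⟨B, hB, rfl⟩ := hx
    rw [interp_lift_zero]
    exact hσ x B hB
  | allE y _ ih =>
    rw [interp_subst_var]
    exact mem_interp_all.1 (ih hI hσ hs) (I y) (hI y)

theorem mem_sem_of_betaStar {A : Ty} {t t' : Lam} (h : Lam.BetaStar t t')
    (d : TyJ0 Ctx.empty t' A) : t ∈ Sem A := by
  intro I hI
  show t ∈ interp A I
  simpa only [Lam.msubst_var] using
    d.msubst_mem_interp hI (σ := Lam.var) (fun _ _ hx => nomatch hx) h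

/-! ### Completeness -/

namespace Ty

def encode : Ty → ℕ
  | var n => Nat.pair 0 n
  | arr A B => Nat.pair 1 (Nat.pair A.encode B.encode)
  | all A => Nat.pair 2 A.encode

theorem encode_injective : Function.Injective encode := by
  intro A B h
  induction A generalizing B with
  | var n => cases B <;> simp_all [encode, Nat.pair_eq_pair]
  | arr a b iha ihb =>
    cases B <;> simp only [encode, Nat.pair_eq_pair] at h <;> try omega
    exact congrArg₂ arr (iha h.2.1) (ihb h.2.2)
  | all a ih =>
    cases B <;> simp only [encode, Nat.pair_eq_pair] at h <;> try omega
    exact congrArg all (ih h.2)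

instance : Countable Ty := encode_injective.countable

instance : Nonempty Ty := ⟨var 0⟩

end Ty

noncomputable def tyEnum : ℕ → Ty := (exists_surjective_nat Ty).choose

theorem tyEnum_surjective : Function.Surjective tyEnum := (exists_surjective_nat Ty).choose_spec

/-- A ∀⁻ context in which every ∀⁻ type is assigned to infinitely many variables. -/
noncomputable def negCtx : Ctx := fun x =>
  haveI := Classical.propDecidable
  if NegTy (tyEnum x.unpair.2) then some (tyEnum x.unpair.2) else none

theorem negCtx_isNeg : negCtx.IsNeg := by
  intro x B hx
  simp only [negCtx] at hx
  split_ifs at hx with h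
  exact Option.some_inj.1 hx ▸ h

theorem exists_negCtx_eq_some {B : Ty} (hB : NegTy B) (s : Finset ℕ) :
    ∃ x ∉ s, negCtx x = some B := by
  obtain ⟨c, rfl⟩ := tyEnum_surjective B
  obtain ⟨k, hk⟩ := s.exists_nat_subset_range
  refine ⟨Nat.pair k c, fun hs => ?_, by simp [negCtx, hB]⟩
  exact absurd (Finset.mem_range.1 (hk hs)) (Nat.left_le_pair k c).not_gt

theorem Ctx.exists_fresh_tyVar (Γ : Ctx) (s F : Finset ℕ) :
    ∃ m ∉ F, ∀ x ∈ s, ∀ B, Γ x = some B → m ∉ B.fv := by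
  obtain ⟨m, hm⟩ := Infinite.exists_notMem_finset (F ∪ s.biUnion fun x => ((Γ x).map Ty.fv).getD ∅)
  refine ⟨m, fun h => hm (Finset.mem_union_left _ h), fun x hx B hB hmB => hm ?_⟩
  exact Finset.mem_union_right _ (Finset.mem_biUnion.2 ⟨x, hx, by simpa [hB] using hmB⟩)

section Completeness

variable (V : Finset ℕ)

def TypedNormalReduct (A : Ty) (u : Lam) : Prop :=
  ∃ u', Lam.BetaStar u u' ∧ u'.Normal ∧ TyJ0 negCtx u' A ∧ Disjoint u'.fv V

def TypedNeutralReduct (A : Ty) (u : Lam) : Prop :=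
  ∃ u', Lam.BetaStar u u' ∧ u'.Neutral ∧ u'.Normal ∧ TyJ0 negCtx u' A ∧ Disjoint u'.fv V

def reductInterp : Interp := fun n => {u | TypedNormalReduct V (.var n) u}

theorem reductInterp_saturated (n : ℕ) : Saturated (reductInterp V n) :=
  fun _ _ htu ⟨u', h, hu'⟩ => ⟨u', htu.betaStar.trans h, hu'⟩

variable {V}

theorem TypedNeutralReduct.typedNormalReduct {A : Ty} {u : Lam}
    (h : TypedNeutralReduct V A u) : TypedNormalReduct V A u :=
  let ⟨u', hu, _, hu'⟩ := h
  ⟨u', hu, hu'⟩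

theorem TypedNeutralReduct.app {A B : Ty} {u v : Lam} (hu : TypedNeutralReduct V (.arr B A) u)
    (hv : TypedNormalReduct V B v) : TypedNeutralReduct V A (.app u v) := by
  obtain ⟨u', hu, hne, hnf, du, hfu⟩ := hu
  obtain ⟨v', hv, hnf', dv, hfv⟩ := hv
  exact ⟨.app u' v', hu.app hv, hne.app v', hne.normal_app hnf hnf', du.app dv,
    by simpa [Lam.fv] using ⟨hfu, hfv⟩⟩

/-- A normal reduct of `u x` for a fresh variable `x` is either `w x` with `w` a neutral
reduct of `u`, or `w[x/0]` where `λw` is a reduct of `u`. -/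
theorem TypedNormalReduct.of_app_var {A B : Ty} {u : Lam} {x : ℕ} (hA : PosTy A)
    (hx : negCtx x = some B) (hxu : x ∉ u.fv) (h : TypedNormalReduct V A (.app u (.var x))) :
    TypedNormalReduct V (.arr B A) u := by
  obtain ⟨w, hw, hnf, d, hfv⟩ := h
  rcases hw.app_cases with ⟨w₁, w₂, rfl, h₁, h₂⟩ | ⟨u₁, h₁, h₂⟩
  · cases (Lam.normal_var x).betaStar_eq h₂
    have hne := hnf.of_app_left.neutral_of_ne_lam hnf.ne_lam_of_app
    exact ⟨w₁, h₁, hnf.of_app_left, d.arr_of_app_var negCtx_isNeg hA hne hx,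
      Finset.disjoint_of_subset_left (fun y hy => by simp [hy]) hfv⟩
  · rw [Lam.subst_zero_var_eq_ren] at h₂
    obtain ⟨w₀, h₀, rfl⟩ := h₂.exists_of_ren
    have hxw₀ : x + 1 ∉ w₀.fv := fun hx' =>
      hxu (h₁.fv_subset (Lam.mem_fv_lam.2 (h₀.fv_subset hx')))
    refine ⟨.lam w₀, h₁.trans h₀.lam, Lam.normal_lam_iff.2 hnf.of_ren, ?_, ?_⟩
    · exact .lam (.cons_of_subst_var (by rwa [Lam.subst_zero_var_eq_ren]) hx hxw₀)
    · refine Finset.disjoint_left.2 fun y hy => Finset.disjoint_left.1 hfv ?_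
      exact Lam.mem_fv_ren.2 ⟨y + 1, Lam.mem_fv_lam.1 hy, rfl⟩

theorem TypedNormalReduct.generalize {A : Ty} {u : Lam} {m : ℕ} (h : TypedNormalReduct V A u)
    (hm : ∀ x ∈ u.fv, ∀ B, negCtx x = some B → m ∉ B.fv) :
    TypedNormalReduct V (.all (A.ren (abstractRen m))) u :=
  let ⟨u', hu, hnf, d, hfv⟩ := h
  ⟨u', hu, hnf, d.generalize fun x hx => hm x (hu.fv_subset hx), hfv⟩

/-- Reification at ∀⁺ types and reflection at ∀⁻ types, as in normalization by evaluation. -/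
theorem reify_and_reflect (A : Ty) (ρ : ℕ → ℕ) :
    (PosTy A → ∀ u ∈ interp A (fun n => reductInterp V (ρ n)),
      TypedNormalReduct V (A.ren ρ) u) ∧
    (NegTy A → ∀ u, TypedNeutralReduct V (A.ren ρ) u →
      u ∈ interp A (fun n => reductInterp V (ρ n))) := by
  induction A generalizing ρ with
  | var n => exact ⟨fun _ _ hu => hu, fun _ _ hu => hu.typedNormalReduct⟩
  | arr B A ihB ihA =>
    refine ⟨fun h u hu => ?_, fun h u hu v hv => ?_⟩
    · cases h with
      | arr hB hA =>
        obtain ⟨x, hx, hxB⟩ := exists_negCtx_eq_some (hB.ren ρ) (u.fv ∪ V)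
        have hvar : Lam.var x ∈ interp B _ := (ihB ρ).2 hB _ ⟨_, .refl, .var x, Lam.normal_var x,
          .var hxB, Finset.disjoint_singleton_left.2 fun h => hx (Finset.mem_union_right _ h)⟩
        exact ((ihA ρ).1 hA _ (hu _ hvar)).of_app_var (hA.ren ρ) hxB
          fun h => hx (Finset.mem_union_left _ h)
    · cases h with
      | arr hB hA => exact (ihA ρ).2 hA _ (hu.app ((ihB ρ).1 hB v hv))
  | all A ih =>
    refine ⟨fun h u hu => ?_, fun h => absurd h (not_negTy_all A)⟩
    cases h with
    | all hA _ =>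
      obtain ⟨m, hmA, hm⟩ := negCtx.exists_fresh_tyVar u.fv ((Ty.all A).fv.image ρ)
      have hu' : u ∈ interp A (fun n => reductInterp V (consRen m ρ n)) := by
        have h := mem_interp_all.1 hu _ (reductInterp_saturated V m)
        rwa [show Interp.cons (reductInterp V m) (fun n => reductInterp V (ρ n)) =
          fun n => reductInterp V (consRen m ρ n) from funext fun n => by cases n <;> rfl] at h
      have h := ((ih (consRen m ρ)).1 hA u hu').generalize hm
      rwa [Ty.ren_consRen_abstractRen fun j hj hjm =>
        hmA (Finset.mem_image.2 ⟨j, Ty.mem_fv_all.2 hj, hjm⟩)] at h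

end Completeness

/-- Theorem 4: for a ∀⁺ type `A`, `t ∈ |A|` iff `t` β-reduces to
a term typable of type `A` in System F0. -/
theorem completeness_F0 (A : Ty) (hA : PosTy A) (t : Lam) :
    t ∈ Sem A ↔ ∃ t', Lam.BetaStar t t' ∧ TyJ0 Ctx.empty t' A := by
  refine ⟨fun h => ?_, fun ⟨t', ht', d⟩ => mem_sem_of_betaStar ht' d⟩
  have hred := (reify_and_reflect A id).1 hA t (h _ (reductInterp_saturated t.fv))
  rw [Ty.ren_id] at hred
  obtain ⟨t', ht', -, d, hfv⟩ := hred
  exact ⟨t', ht', d.congr_ctx fun x hx =>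
    absurd (ht'.fv_subset hx) (Finset.disjoint_left.1 hfv hx)⟩
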